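/- arXiv:1310.6151 — 4 statements merged into one kernel-verified Lean document; each statement's English description precedes it below -/
import Mathlib

section
/- For every a ≥ 0 the series f(a) := Σ_{n=0}^∞ (n^{n/2}/n!) a^n converges (with the convention 0^0 = 1), and satisfies f(a) ≤ (1+a)·exp(2a²). -/
open Real

noncomputable section

lemma nat_even_key (k : ℕ) : (2*k)^k * Nat.factorial k ≤ 2^k * Nat.factorial (2*k) := by
  have h : Nat.factorial k * (k+1)^k ≤ Nat.factorial (k + k) := Nat.factorial_mul_pow_le_factorial
  calc (2*k)^k * Nat.factorial k = 2^k * (k^k * Nat.factorial k) := by rw [mul_pow]; ring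
    _ ≤ 2^k * ((k+1)^k * Nat.factorial k) := by
        have : k^k ≤ (k+1)^k := Nat.pow_le_pow_left (Nat.le_succ k) k
        exact Nat.mul_le_mul_left _ (Nat.mul_le_mul_right _ this)
    _ = 2^k * (Nat.factorial k * (k+1)^k) := by ring
    _ ≤ 2^k * Nat.factorial (2*k) := by
        have := h
        rw [two_mul]
        exact Nat.mul_le_mul_left _ this

lemma nat_odd_key (k : ℕ) : (2*k+1)^(k+1) * Nat.factorial k ≤ 2^k * Nat.factorial (2*k+1) := by
  have h : Nat.factorial k * (k+1)^k ≤ Nat.factorial (k + k) := Nat.factorial_mul_pow_le_factorial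
  calc (2*k+1)^(k+1) * Nat.factorial k
      = (2*k+1) * ((2*k+1)^k * Nat.factorial k) := by ring
    _ ≤ (2*k+1) * ((2*(k+1))^k * Nat.factorial k) := by
        have : (2*k+1)^k ≤ (2*(k+1))^k := Nat.pow_le_pow_left (by omega) k
        exact Nat.mul_le_mul_left _ (Nat.mul_le_mul_right _ this)
    _ = 2^k * ((2*k+1) * (Nat.factorial k * (k+1)^k)) := by rw [mul_pow]; ring
    _ ≤ 2^k * ((2*k+1) * Nat.factorial (k+k)) :=
        Nat.mul_le_mul_left _ (Nat.mul_le_mul_left _ h)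
    _ = 2^k * Nat.factorial (2*k+1) := by
        rw [Nat.factorial_succ]
        ring_nf

/-- The entire function `f(a) = Σ_{n=0}^∞ (n^{n/2}/n!) a^n` (with `0^0 = 1`). -/
def hadamardF (a : ℝ) : ℝ :=
  ∑' n : ℕ, (n : ℝ) ^ ((n : ℝ) / 2) / (Nat.factorial n) * a ^ n

/-- For every `a ≥ 0` the series `Σ (n^{n/2}/n!) a^n` converges and its sum is
bounded by `(1+a)·exp(2a²)`. -/
theorem hadamardF_summable_and_le (a : ℝ) (ha : 0 ≤ a) :
    Summable (fun n : ℕ => (n : ℝ) ^ ((n : ℝ) / 2) / (Nat.factorial n) * a ^ n) ∧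
    hadamardF a ≤ (1 + a) * Real.exp (2 * a ^ 2) := by
  set t : ℕ → ℝ := fun n => (n : ℝ) ^ ((n : ℝ) / 2) / (Nat.factorial n) * a ^ n with ht
  set u : ℕ → ℝ := fun n => (2*a^2) ^ (n / 2) / (Nat.factorial (n / 2)) * a ^ (n % 2) with hu
  have hc : Summable (fun k : ℕ => (2*a^2) ^ k / (Nat.factorial k) : ℕ → ℝ) :=
    Real.summable_pow_div_factorial (2*a^2)
  have hueven : ∀ k, u (2*k) = (2*a^2)^k / Nat.factorial k := by
    intro k
    simp [hu, Nat.mul_div_cancel_left, Nat.mul_mod_right]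
  have huodd : ∀ k, u (2*k+1) = a * ((2*a^2)^k / Nat.factorial k) := by
    intro k
    have h1 : (2*k+1)/2 = k := by omega
    have h2 : (2*k+1) % 2 = 1 := by omega
    simp [hu, h1, h2]
    ring
  have hS : HasSum u (Real.exp (2*a^2) + a * Real.exp (2*a^2)) := by
    have he : HasSum (fun k => u (2*k)) (Real.exp (2*a^2)) := by
      have := hc.hasSum
      have hexp : (∑' k : ℕ, (2*a^2)^k / (Nat.factorial k) : ℝ) = Real.exp (2*a^2) := by
        rw [Real.exp_eq_exp_ℝ, NormedSpace.exp_eq_tsum_div]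
      simp only [hueven]
      rw [← hexp]
      exact hc.hasSum
    have ho : HasSum (fun k => u (2*k+1)) (a * Real.exp (2*a^2)) := by
      have hexp : (∑' k : ℕ, (2*a^2)^k / (Nat.factorial k) : ℝ) = Real.exp (2*a^2) := by
        rw [Real.exp_eq_exp_ℝ, NormedSpace.exp_eq_tsum_div]
      simp only [huodd]
      rw [← hexp]
      exact hc.hasSum.mul_left a
    simpa using he.even_add_odd ho
  have htnonneg : ∀ n, 0 ≤ t n := by
    intro n
    apply mul_nonneg
    · apply div_nonneg
      · exact Real.rpow_nonneg (Nat.cast_nonneg n) _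
      · positivity
    · exact pow_nonneg ha n
  have htu : ∀ n, t n ≤ u n := by
    intro n
    rcases Nat.even_or_odd n with ⟨k, hk⟩ | ⟨k, hk⟩
    · subst hk
      rw [show k + k = 2*k by ring, hueven]
      have hcast : ((2*k : ℕ) : ℝ) / 2 = (k : ℕ) := by push_cast; ring
      have : t (2*k) = ((2*k : ℕ) : ℝ) ^ (k:ℕ) / (Nat.factorial (2*k)) * a ^ (2*k) := by
        rw [ht]; simp only []
        rw [hcast, Real.rpow_natCast]
      rw [this]
      have key : ((2*k : ℕ) : ℝ) ^ (k:ℕ) / (Nat.factorial (2*k)) ≤ 2^k / Nat.factorial k := by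
        rw [div_le_div_iff₀ (by positivity) (by positivity)]
        exact_mod_cast nat_even_key k
      calc ((2*k : ℕ) : ℝ) ^ (k:ℕ) / (Nat.factorial (2*k)) * a ^ (2*k)
          ≤ 2^k / Nat.factorial k * a ^ (2*k) :=
            mul_le_mul_of_nonneg_right key (pow_nonneg ha _)
        _ = (2*a^2)^k / Nat.factorial k := by
            rw [mul_pow, pow_mul]; ring
    · subst hk
      rw [huodd]
      have h1 : (1:ℝ) ≤ ((2*k+1 : ℕ) : ℝ) := by exact_mod_cast Nat.one_le_iff_ne_zero.2 (by omega)
      have hle : ((2*k+1 : ℕ) : ℝ) ^ (((2*k+1 : ℕ) : ℝ) / 2)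
          ≤ ((2*k+1 : ℕ) : ℝ) ^ ((k+1 : ℕ) : ℝ) := by
        apply Real.rpow_le_rpow_of_exponent_le h1
        push_cast; linarith
      have step1 : t (2*k+1) ≤ ((2*k+1 : ℕ) : ℝ) ^ (k+1) / (Nat.factorial (2*k+1)) * a ^ (2*k+1) := by
        rw [ht]; simp only []
        have hle' : ((2*k+1 : ℕ) : ℝ) ^ (((2*k+1 : ℕ) : ℝ) / 2) ≤ ((2*k+1 : ℕ) : ℝ) ^ (k+1 : ℕ) := by
          rw [← Real.rpow_natCast (((2*k+1 : ℕ) : ℝ)) (k+1)]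
          exact_mod_cast hle
        exact mul_le_mul_of_nonneg_right
          (div_le_div_of_nonneg_right hle' (by positivity) |>.trans_eq rfl |>.trans_eq rfl)
          (pow_nonneg ha _)
      refine step1.trans ?_
      have key : ((2*k+1 : ℕ) : ℝ) ^ (k+1) / (Nat.factorial (2*k+1)) ≤ 2^k / Nat.factorial k := by
        rw [div_le_div_iff₀ (by positivity) (by positivity)]
        exact_mod_cast nat_odd_key k
      calc ((2*k+1 : ℕ) : ℝ) ^ (k+1) / (Nat.factorial (2*k+1)) * a ^ (2*k+1)
          ≤ 2^k / Nat.factorial k * a ^ (2*k+1) :=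
            mul_le_mul_of_nonneg_right key (pow_nonneg ha _)
        _ = a * ((2*a^2)^k / Nat.factorial k) := by
            rw [mul_pow, pow_succ, pow_mul]; ring
  have hsum : Summable t := Summable.of_nonneg_of_le htnonneg htu hS.summable
  refine ⟨hsum, ?_⟩
  have : hadamardF a = ∑' n, t n := rfl
  rw [this]
  calc (∑' n, t n) ≤ ∑' n, u n := Summable.tsum_le_tsum htu hsum hS.summable
    _ = Real.exp (2*a^2) + a * Real.exp (2*a^2) := hS.tsum_eq
    _ = (1 + a) * Real.exp (2 * a ^ 2) := by ring
end
end

section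
/- The function f(a) = Σ_{n=0}^∞ (n^{n/2}/n!) a^n satisfies f(1/2) < 2; equivalently, since f is strictly increasing on [0,∞), f⁻¹(2) > 1/2. -/
open Real

open Finset in
/-- Pairing `k(n+1-k) ≥ n` gives `n^n ≤ (n!)^2`. -/
lemma pow_self_le_sq_factorial (n : ℕ) : n ^ n ≤ (Nat.factorial n) ^ 2 := by
  have h2 : (∏ i ∈ range n, (n - i)) = Nat.factorial n := by
    calc (∏ i ∈ range n, (n - i)) = ∏ i ∈ range n, (n - 1 - i + 1) := by
          apply prod_congr rfl
          intro i hi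
          simp only [mem_range] at hi
          omega
      _ = ∏ i ∈ range n, (i + 1) := prod_range_reflect (fun i => i + 1) n
      _ = Nat.factorial n := prod_range_add_one_eq_factorial n
  calc n ^ n = ∏ _i ∈ range n, n := by rw [prod_const, card_range]
    _ ≤ ∏ i ∈ range n, (i + 1) * (n - i) := by
        apply prod_le_prod'
        intro i hi
        simp only [mem_range] at hi
        have : n - i + i = n := Nat.sub_add_cancel hi.le
        nlinarith
    _ = (Nat.factorial n) ^ 2 := by
        rw [prod_mul_distrib, prod_range_add_one_eq_factorial, h2, sq]

/-- `n^(n/2) ≤ n!` as reals. -/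
lemma coeff_le_factorial (n : ℕ) : (n : ℝ) ^ ((n : ℝ) / 2) ≤ (Nat.factorial n : ℝ) := by
  have hn : (0:ℝ) ≤ (n:ℝ) := n.cast_nonneg
  have h1 : (n : ℝ) ^ ((n : ℝ) / 2) = Real.sqrt ((n:ℝ) ^ n) := by
    rw [Real.sqrt_eq_rpow, ← Real.rpow_natCast (n:ℝ) n, ← Real.rpow_mul hn]
    ring_nf
  rw [h1]
  have h2 : ((n:ℝ) ^ n) ≤ ((Nat.factorial n : ℝ)) ^ 2 := by
    exact_mod_cast pow_self_le_sq_factorial n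
  calc Real.sqrt ((n:ℝ) ^ n) ≤ Real.sqrt (((Nat.factorial n : ℝ)) ^ 2) :=
        Real.sqrt_le_sqrt h2
    _ = (Nat.factorial n : ℝ) := Real.sqrt_sq (Nat.cast_nonneg _)

noncomputable section

/-- `f(1/2) < 2` (equivalently, `f⁻¹(2) > 1/2` since `f` is strictly increasing
on `[0,∞)`). -/
theorem hadamardF_half_lt_two : hadamardF (1 / 2) < 2 := by
  have key : hadamardF (1/2) < ∑' n : ℕ, ((1:ℝ)/2) ^ n := by
    apply Summable.tsum_lt_tsum_of_nonneg (i := 3)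
    · intro n
      positivity
    · intro n
      have hf : (0:ℝ) < (Nat.factorial n : ℝ) := by
        exact_mod_cast n.factorial_pos
      have := coeff_le_factorial n
      have hpow : (0:ℝ) ≤ ((1:ℝ)/2) ^ n := by positivity
      calc (n : ℝ) ^ ((n : ℝ) / 2) / (Nat.factorial n) * (1/2) ^ n
          ≤ (Nat.factorial n : ℝ) / (Nat.factorial n) * (1/2) ^ n := by
            apply mul_le_mul_of_nonneg_right _ hpow
            gcongr
        _ = (1/2) ^ n := by rw [div_self hf.ne', one_mul]
    · have h27 : ((3:ℕ):ℝ) ^ (((3:ℕ):ℝ) / 2) < 6 := by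
        have e : ((3:ℕ):ℝ) ^ (((3:ℕ):ℝ) / 2) = Real.sqrt ((3:ℝ) ^ (3:ℕ)) := by
          push_cast
          rw [Real.sqrt_eq_rpow, ← Real.rpow_natCast (3:ℝ) 3, ← Real.rpow_mul (by norm_num)]
          norm_num
        rw [e, show ((3:ℝ) ^ (3:ℕ)) = 27 by norm_num]
        exact (Real.sqrt_lt' (by norm_num)).2 (by norm_num)
      have hnn : (0:ℝ) ≤ ((3:ℕ):ℝ) ^ (((3:ℕ):ℝ) / 2) := Real.rpow_nonneg (by norm_num) _
      have hfac : (Nat.factorial 3 : ℝ) = 6 := by norm_num [Nat.factorial]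
      rw [hfac]
      nlinarith [h27, hnn]
    · exact summable_geometric_two
  rwa [tsum_geometric_two] at key
end
end

section
/- Let V : ℝ³ → ℂ be continuously differentiable with compact support, and let x, y ∈ ℝ³. Set c = |x−y|/2, d = diam(supp V), and δ = dist([x,y], supp V), where [x,y] is the segment joining x and y. Then ∫_c^∞ (sup_{z ∈ E(x,y,r)} |∇V(z)|) · r dr/√(r²−c²) ≤ ‖∇V‖_∞ · (c + d), where E(x,y,r) = { z ∈ ℝ³ : |z−x| + |z−y| = 2r }. (Indeed V vanishes on E(x,y,r) whenever r < √(c²+δ²) or r > c + d + δ.) -/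
open MeasureTheory Real

noncomputable section

abbrev R3 := EuclideanSpace ℝ (Fin 3)

/-!
A point `z` of `E(x, y, r)` lies within `√(r² - c²)` of the segment `[x, y]`, and by the triangle
inequality `r ≤ c + dist(z, [x, y])`. For `z` in the support of `V` this forces
`√(c² + δ²) ≤ r ≤ c + d + δ`, so the integrand vanishes outside this interval and is bounded by
`‖∇V‖_∞ r / √(r² - c²) = ‖∇V‖_∞ (d/dr) √(r² - c²)` on it. Integrating gives
`‖∇V‖_∞ (√((c + d + δ)² - c²) - δ) ≤ ‖∇V‖_∞ (c + d)`.
-/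

open Metric Set

open scoped RealInnerProductSpace

theorem hasDerivAt_sqrt_sq_sub_sq {c r : ℝ} (h : |c| < r) :
    HasDerivAt (fun r => √(r ^ 2 - c ^ 2)) (r / √(r ^ 2 - c ^ 2)) r := by
  have hpos : 0 < r ^ 2 - c ^ 2 := sub_pos.2 (sq_lt_sq' (neg_lt_of_abs_lt h) (lt_of_abs_lt h))
  convert ((hasDerivAt_pow 2 r).sub_const (c ^ 2)).sqrt hpos.ne' using 1
  field_simp
  ring

section SqrtSqSubSq

variable {a b c : ℝ}

theorem continuous_sqrt_sq_sub_sq : Continuous fun r : ℝ => √(r ^ 2 - c ^ 2) := by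
  fun_prop

theorem integrableOn_div_sqrt_sq_sub_sq (hca : |c| ≤ a) :
    IntegrableOn (fun r => r / √(r ^ 2 - c ^ 2)) (Icc a b) := by
  rw [integrableOn_Icc_iff_integrableOn_Ioc]
  exact intervalIntegral.integrableOn_deriv_of_nonneg continuous_sqrt_sq_sub_sq.continuousOn
    (fun r hr => hasDerivAt_sqrt_sq_sub_sq (hca.trans_lt hr.1))
    (fun r hr => div_nonneg (by linarith [abs_nonneg c, hr.1]) (Real.sqrt_nonneg _))

theorem integral_div_sqrt_sq_sub_sq (hca : |c| ≤ a) (hab : a ≤ b) :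
    ∫ r in a..b, r / √(r ^ 2 - c ^ 2) = √(b ^ 2 - c ^ 2) - √(a ^ 2 - c ^ 2) :=
  intervalIntegral.integral_eq_sub_of_hasDerivAt_of_le hab continuous_sqrt_sq_sub_sq.continuousOn
    (fun r hr => hasDerivAt_sqrt_sq_sub_sq (hca.trans_lt hr.1))
    ((intervalIntegrable_iff_integrableOn_Icc_of_le hab).2 (integrableOn_div_sqrt_sq_sub_sq hca))

end SqrtSqSubSq

theorem setIntegral_Ioi_mul_div_sqrt_sq_sub_sq_le {S : ℝ → ℝ} {M c δ b : ℝ} (hc : 0 ≤ c)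
    (hδ : 0 ≤ δ) (hb : c + δ ≤ b) (hS0 : ∀ r, 0 ≤ S r) (hSM : ∀ r, S r ≤ M)
    (hS : ∀ r, c < r → S r ≠ 0 → c ^ 2 + δ ^ 2 ≤ r ^ 2 ∧ r ≤ b) :
    ∫ r in Ioi c, S r * r / √(r ^ 2 - c ^ 2) ≤ M * (b - δ) := by
  set a := √(c ^ 2 + δ ^ 2)
  have hca : |c| ≤ a := by
    rw [abs_of_nonneg hc, Real.le_sqrt hc (by positivity)]; nlinarith
  have hab : a ≤ b := by
    rw [Real.sqrt_le_left (by linarith)]; nlinarith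
  have ha : √(a ^ 2 - c ^ 2) = δ := by
    rw [Real.sq_sqrt (by positivity), add_sub_cancel_left, Real.sqrt_sq hδ]
  have hM : 0 ≤ M := (hS0 0).trans (hSM 0)
  have hF : ∀ r ∈ Icc a b, 0 ≤ M * (r / √(r ^ 2 - c ^ 2)) := fun r hr =>
    mul_nonneg hM (div_nonneg ((abs_nonneg c).trans (hca.trans hr.1)) (Real.sqrt_nonneg _))
  have hle : ∀ r, (Ioi c).indicator (fun r => S r * r / √(r ^ 2 - c ^ 2)) r ≤
      (Icc a b).indicator (fun r => M * (r / √(r ^ 2 - c ^ 2))) r := by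
    intro r
    by_cases hr : r ∈ Ioi c
    · by_cases hSr : S r = 0
      · rw [indicator_of_mem hr, hSr, zero_mul, zero_div]
        exact indicator_nonneg hF r
      have hr0 : 0 ≤ r := hc.trans (le_of_lt hr)
      obtain ⟨hra, hrb⟩ := hS r hr hSr
      have hrab : r ∈ Icc a b := ⟨Real.sqrt_le_left hr0 |>.2 hra, hrb⟩
      rw [indicator_of_mem hr, indicator_of_mem hrab, mul_div_assoc]
      exact mul_le_mul_of_nonneg_right (hSM r) (div_nonneg hr0 (Real.sqrt_nonneg _))
    · rw [indicator_of_notMem hr]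
      exact indicator_nonneg hF r
  calc ∫ r in Ioi c, S r * r / √(r ^ 2 - c ^ 2)
      = ∫ r, (Ioi c).indicator (fun r => S r * r / √(r ^ 2 - c ^ 2)) r :=
        (integral_indicator measurableSet_Ioi).symm
    _ ≤ ∫ r, (Icc a b).indicator (fun r => M * (r / √(r ^ 2 - c ^ 2))) r := by
        refine integral_mono_of_nonneg (ae_of_all _ fun r => indicator_nonneg (fun r hr => ?_) r)
          (IntegrableOn.integrable_indicator
            ((integrableOn_div_sqrt_sq_sub_sq hca).const_mul M) measurableSet_Icc) (ae_of_all _ hle)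
        exact div_nonneg (mul_nonneg (hS0 r) (hc.trans (le_of_lt hr))) (Real.sqrt_nonneg _)
    _ = M * ∫ r in a..b, r / √(r ^ 2 - c ^ 2) := by
        rw [integral_indicator measurableSet_Icc, integral_const_mul, integral_Icc_eq_integral_Ioc,
          intervalIntegral.integral_of_le hab]
    _ = M * (√(b ^ 2 - c ^ 2) - δ) := by rw [integral_div_sqrt_sq_sub_sq hca hab, ha]
    _ ≤ M * (b - δ) := by
        gcongr
        exact Real.sqrt_le_left (by linarith) |>.2 (by nlinarith)

section InfDistSet

variable {α : Type*} [PseudoMetricSpace α] {K s : Set α} {z : α}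

/-- Equals `0` when `K` is empty. -/
def infDistSet (K s : Set α) : ℝ := ⨅ w : K, infDist (w : α) s

theorem infDistSet_nonneg : 0 ≤ infDistSet K s :=
  Real.iInf_nonneg fun _ => infDist_nonneg

theorem infDistSet_le_infDist (hz : z ∈ K) : infDistSet K s ≤ infDist z s :=
  ciInf_le ⟨0, by rintro _ ⟨w, rfl⟩; exact infDist_nonneg⟩ (⟨z, hz⟩ : K)

theorem infDist_le_infDistSet_add_diam (hK : Bornology.IsBounded K) (hz : z ∈ K) :
    infDist z s ≤ infDistSet K s + diam K := by
  have : Nonempty K := ⟨⟨z, hz⟩⟩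
  have : infDist z s - diam K ≤ infDistSet K s := le_ciInf fun w => by
    linarith [infDist_le_infDist_add_dist (s := s) (x := z) (y := w), dist_le_diam_of_mem hK hz w.2]
  linarith

end InfDistSet

section InnerProductSpace

variable {E : Type*} [NormedAddCommGroup E] [InnerProductSpace ℝ E] {K : Set E} {x y z : E} {r : ℝ}

theorem exists_mem_Icc_norm_sub_smul_sq_le {w u : E} (hr : 0 < r)
    (h : ‖w + u‖ + ‖w - u‖ = 2 * r) :
    ∃ t ∈ Icc (-1 : ℝ) 1, ‖w - t • u‖ ^ 2 ≤ r ^ 2 - ‖u‖ ^ 2 := by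
  have hA := norm_add_sq_real w u
  have hB := norm_sub_sq_real w u
  have hAB : ‖(w + u) - (w - u)‖ ≤ ‖w + u‖ + ‖w - u‖ := norm_sub_le _ _
  rw [show (w + u) - (w - u) = (2 : ℝ) • u by module, norm_smul, Real.norm_two] at hAB
  have hq : 2 * r * (‖w + u‖ - ‖w - u‖) = 4 * ⟪w, u⟫ := by
    linear_combination -(‖w + u‖ - ‖w - u‖) * h + hA - hB
  have hqr : |⟪w, u⟫| ≤ r ^ 2 := by
    rw [abs_le]; constructor <;> nlinarith [norm_nonneg (w + u), norm_nonneg (w - u)]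
  have hw : r ^ 2 * ‖w‖ ^ 2 = r ^ 4 - r ^ 2 * ‖u‖ ^ 2 + ⟪w, u⟫ ^ 2 := by
    linear_combination -(r ^ 2 / 2) * (hA + hB) + r ^ 2 * (‖w + u‖ + ‖w - u‖ + 2 * r) / 4 * h
      + (r * (‖w + u‖ - ‖w - u‖) / 2 + ⟪w, u⟫) / 4 * hq
  -- With this `t`, `r⁴ ‖w - t • u‖² = (r² - ‖u‖²) (r⁴ - ⟪w, u⟫²)`.
  refine ⟨⟪w, u⟫ / r ^ 2, ?_, ?_⟩
  · rw [mem_Icc, le_div_iff₀ (by positivity), div_le_one (by positivity)]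
    constructor <;> linarith [abs_le.1 hqr]
  · rw [norm_sub_sq_real, inner_smul_right, norm_smul, mul_pow, Real.norm_eq_abs, sq_abs]
    have : r ^ 4 * (‖w‖ ^ 2 - 2 * (⟪w, u⟫ / r ^ 2 * ⟪w, u⟫) + (⟪w, u⟫ / r ^ 2) ^ 2 * ‖u‖ ^ 2)
        = r ^ 4 * (r ^ 2 - ‖u‖ ^ 2) - ⟪w, u⟫ ^ 2 * (r ^ 2 - ‖u‖ ^ 2) := by
      field_simp
      linear_combination r ^ 2 * hw
    have hur : ‖u‖ ^ 2 ≤ r ^ 2 := pow_le_pow_left₀ (norm_nonneg u) (by linarith) 2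
    refine le_of_mul_le_mul_left ?_ (by positivity : (0 : ℝ) < r ^ 4)
    rw [this]
    linarith [mul_nonneg (sq_nonneg ⟪w, u⟫) (sub_nonneg.2 hur)]

theorem sq_infDist_segment_le (hr : 0 < r) (hz : ‖z - x‖ + ‖z - y‖ = 2 * r) :
    infDist z (segment ℝ x y) ^ 2 ≤ r ^ 2 - (‖x - y‖ / 2) ^ 2 := by
  set u : E := (2⁻¹ : ℝ) • (y - x)
  have hu : ‖u‖ = ‖x - y‖ / 2 := by
    rw [norm_smul, norm_sub_rev]; norm_num; ring
  obtain ⟨t, ⟨ht₁, ht₂⟩, ht⟩ := exists_mem_Icc_norm_sub_smul_sq_le (w := z - (x + u)) (u := u) hr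
    (by rwa [show z - (x + u) + u = z - x by abel, show z - (x + u) - u = z - y by module])
  have hp : x + u + t • u ∈ segment ℝ x y := by
    rw [segment_eq_image']
    exact ⟨(1 + t) / 2, ⟨by linarith, by linarith⟩, by module⟩
  calc infDist z (segment ℝ x y) ^ 2 ≤ dist z (x + u + t • u) ^ 2 :=
        pow_le_pow_left₀ infDist_nonneg (infDist_le_dist_of_mem hp) 2
    _ = ‖z - (x + u) - t • u‖ ^ 2 := by rw [dist_eq_norm, sub_sub]
    _ ≤ r ^ 2 - (‖x - y‖ / 2) ^ 2 := hu ▸ ht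

theorem sq_add_sq_infDistSet_segment_le (hr : 0 < r) (hz : ‖z - x‖ + ‖z - y‖ = 2 * r)
    (hzK : z ∈ K) : (‖x - y‖ / 2) ^ 2 + infDistSet K (segment ℝ x y) ^ 2 ≤ r ^ 2 := by
  have h := pow_le_pow_left₀ infDistSet_nonneg (infDistSet_le_infDist (s := segment ℝ x y) hzK) 2
  linarith [sq_infDist_segment_le hr hz]

end InnerProductSpace

section NormedSpace

variable {E : Type*} [NormedAddCommGroup E] [NormedSpace ℝ E] {K : Set E} {x y z : E} {r : ℝ}

theorem le_half_norm_add_infDist_segment (hz : ‖z - x‖ + ‖z - y‖ = 2 * r) :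
    r ≤ ‖x - y‖ / 2 + infDist z (segment ℝ x y) := by
  rw [← dist_eq_norm, ← dist_eq_norm] at hz
  rw [← dist_eq_norm]
  suffices r - dist x y / 2 ≤ infDist z (segment ℝ x y) by linarith
  refine (le_infDist ⟨x, left_mem_segment ℝ x y⟩).2 fun p hp => ?_
  linarith [dist_add_dist_of_mem_segment hp, dist_triangle z p x, dist_triangle z p y, dist_comm p x]

theorem le_add_diam_add_infDistSet_segment (hK : Bornology.IsBounded K)
    (hz : ‖z - x‖ + ‖z - y‖ = 2 * r) (hzK : z ∈ K) :
    r ≤ ‖x - y‖ / 2 + diam K + infDistSet K (segment ℝ x y) := by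
  linarith [le_half_norm_add_infDist_segment hz,
    infDist_le_infDistSet_add_diam (s := segment ℝ x y) hK hzK]

end NormedSpace

theorem exists_mem_ne_zero_of_biSup_norm_ne_zero {α F : Type*} [NormedAddCommGroup F]
    {f : α → F} {s : Set α} (h : ⨆ z ∈ s, ‖f z‖ ≠ 0) : ∃ z ∈ s, f z ≠ 0 := by
  by_contra! hf
  exact h (by simp +contextual [hf])

/-- For a compactly supported `C¹` potential, the ellipsoid integral
`∫_c^∞ (sup_{E(x,y,r)} |∇V|) r dr/√(r²−c²)` is bounded by `‖∇V‖_∞ (c + d)`,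
where `c = |x−y|/2` and `d = diam(supp V)`. -/
theorem ellipsoid_integral_bound_compact_support
    (V : R3 → ℂ) (hV : ContDiff ℝ 1 V) (hsupp : HasCompactSupport V)
    (x y : R3) (c d : ℝ)
    (hc : c = ‖x - y‖ / 2) (hd : d = Metric.diam (Function.support V)) :
    (∫ r in Set.Ioi c,
        (⨆ z ∈ {w : R3 | ‖w - x‖ + ‖w - y‖ = 2 * r}, ‖fderiv ℝ V z‖) *
          r / Real.sqrt (r ^ 2 - c ^ 2))
      ≤ (⨆ w : R3, ‖fderiv ℝ V w‖) * (c + d) := by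
  set M := ⨆ w : R3, ‖fderiv ℝ V w‖
  have hM : ∀ w, ‖fderiv ℝ V w‖ ≤ M := le_ciSup <|
    (hV.continuous_fderiv one_ne_zero).norm.bddAbove_range_of_hasCompactSupport
      (hsupp.fderiv (𝕜 := ℝ)).norm
  set δ := infDistSet (tsupport V) (segment ℝ x y)
  have hc0 : 0 ≤ c := hc ▸ by positivity
  have hd0 : d = diam (tsupport V) := by rw [hd, tsupport, diam_closure]
  calc _ ≤ M * (c + d + δ - δ) :=
        setIntegral_Ioi_mul_div_sqrt_sq_sub_sq_le hc0 infDistSet_nonneg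
          (by linarith [diam_nonneg (s := tsupport V)]) ?_ ?_ ?_
    _ = M * (c + d) := by ring
  · exact fun r => Real.iSup_nonneg fun z => Real.iSup_nonneg fun _ => norm_nonneg _
  · exact fun r => Real.iSup_le (fun z => Real.iSup_le (fun _ => hM z)
      ((norm_nonneg _).trans (hM z))) ((norm_nonneg _).trans (hM 0))
  intro r hr hS
  obtain ⟨z, hz, hVz⟩ := exists_mem_ne_zero_of_biSup_norm_ne_zero hS
  have hzK : z ∈ tsupport V := support_fderiv_subset ℝ hVz
  rw [hc, hd0]
  exact ⟨sq_add_sq_infDistSet_segment_le (hc0.trans_lt hr) hz hzK,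
    le_add_diam_add_infDistSet_segment hsupp.isCompact.isBounded hz hzK⟩
end
end

section
/- Let ε > 0, x, y ∈ ℝ³, c = |x−y|/2, and μ = min_{t∈[0,1]} |x + t(y−x)|. Then for every r ≥ c and every point z ∈ ℝ³ with |z−x| + |z−y| = 2r, one has e^{−ε|z|} ≤ e^{ε(c+μ−r)}·𝟙[r ≥ √(μ²+c²)] + e^{ε(√(r²−c²)−μ)}·𝟙[r ≤ c+μ], where 𝟙[·] denotes the indicator of the stated condition. In particular, if |∇V(z)| ≤ εA e^{−ε|z|} for all z, then on the ellipsoid E(x,y,r) = { z : |z−x|+|z−y| = 2r } one has |∇V| ≤ εA ( e^{ε(c+μ−r)} ϑ(r−√(μ²+c²)) + e^{ε(√(r²−c²)−μ)} ϑ(c+μ−r) ), ϑ being the Heaviside step function. -/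
open MeasureTheory Real

noncomputable section

/-- The Heaviside step function: `θ s = 1` for `s ≥ 0` and `θ s = 0` for `s < 0`. -/
def heaviside (s : ℝ) : ℝ := if 0 ≤ s then 1 else 0

open RealInnerProductSpace

lemma quad_aux (c r u : ℝ) (hc : 0 < c) (hcu : c ≤ u) (hur : u ≤ r) :
    c^2*u^2 - 2*c*u*r^2 + c^2*r^2 ≤ 0 := by
  nlinarith [mul_nonneg (sq_nonneg r) (sub_nonneg.2 hcu),
    mul_nonneg (sq_nonneg u) (sub_nonneg.2 hcu),
    mul_nonneg (mul_nonneg (hc.trans_le hcu).le (sub_nonneg.2 hur))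
      (by nlinarith : (0:ℝ) ≤ r + u), hc.le, sq_nonneg (u - c), sq_nonneg (r - u)]

set_option maxHeartbeats 1000000 in
lemma geom_key (x y z : R3) (c r : ℝ) (hc : c = ‖x - y‖ / 2) (hr : c ≤ r)
    (hz : ‖z - x‖ + ‖z - y‖ = 2 * r) :
    ∃ t : ℝ, t ∈ Set.Icc (0:ℝ) 1 ∧ ‖z - (x + t • (y - x))‖ ^ 2 ≤ r ^ 2 - c ^ 2 := by
  have hcn : 0 ≤ c := by rw [hc]; positivity
  rcases eq_or_lt_of_le hr with hrc | hrc
  · -- r = c : z lies on the segment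
    have hd : dist x z + dist z y = dist x y := by
      rw [dist_eq_norm, dist_eq_norm, dist_eq_norm, norm_sub_rev x z]
      have : ‖x - y‖ = 2 * c := by rw [hc]; ring
      rw [this, hrc]; exact hz
    have hw : Wbtw ℝ x z y := dist_add_dist_eq_iff.mp hd
    have hseg : z ∈ segment ℝ x y := mem_segment_iff_wbtw.mpr hw
    rw [segment_eq_image'] at hseg
    obtain ⟨t, ht, hteq⟩ := hseg
    refine ⟨t, ht, ?_⟩
    have hteq' : x + t • (y - x) = z := hteq
    rw [hteq', sub_self, norm_zero, ← hrc]
    simp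
  · by_cases hc0 : c = 0
    · refine ⟨0, by norm_num, ?_⟩
      have hxy : x = y := by
        have : ‖x - y‖ = 0 := by rw [hc0] at hc; linarith [norm_nonneg (x - y)]
        rwa [norm_sub_eq_zero_iff] at this
      subst hxy
      simp only [zero_smul, add_zero]
      have h1 : ‖z - x‖ = r := by linarith
      rw [h1, hc0]; nlinarith
    · have hcp : 0 < c := lt_of_le_of_ne hcn (Ne.symm hc0)
      have hr0 : 0 < r := hcp.trans hrc
      set e : R3 := (2*c)⁻¹ • (y - x) with he_def
      have hce : (2*c) • e = y - x := by
        rw [he_def, smul_smul, mul_inv_cancel₀ (by positivity), one_smul]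
      have he1 : ‖e‖ = 1 := by
        have h2c : ‖y - x‖ = 2 * c := by rw [norm_sub_rev, hc]; ring
        rw [he_def, norm_smul, h2c, Real.norm_eq_abs, abs_of_pos (by positivity)]
        field_simp
      set v : R3 := z - x - c • e with hv_def
      have h1 : z - x = v + c • e := by rw [hv_def]; abel
      have h2 : z - y = v - c • e := by
        have : z - y = z - x - (y - x) := by abel
        rw [this, ← hce, hv_def, two_mul, add_smul]; abel
      set s : ℝ := ⟪v, e⟫ with hs_def
      have hα : ‖v + c • e‖ ^ 2 = ‖v‖ ^ 2 + 2 * (c * s) + c ^ 2 := by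
        rw [norm_add_sq_real, real_inner_smul_right, norm_smul, he1, ← hs_def,
          Real.norm_eq_abs, abs_of_pos hcp]
        ring
      have hβ : ‖v - c • e‖ ^ 2 = ‖v‖ ^ 2 - 2 * (c * s) + c ^ 2 := by
        rw [norm_sub_sq_real, real_inner_smul_right, norm_smul, he1, ← hs_def,
          Real.norm_eq_abs, abs_of_pos hcp]
        ring
      set a := ‖v + c • e‖ with ha_def
      set b := ‖v - c • e‖ with hb_def
      have hsum : a + b = 2 * r := by rw [ha_def, hb_def, ← h1, ← h2]; exact hz
      have hdiff : (a - b) * (2 * r) = 4 * (c * s) := by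
        linear_combination hα - hβ - (a - b) * hsum
      have haa : a * r = r ^ 2 + c * s := by
        linear_combination hdiff / 4 + (r / 2) * hsum
      have hbb : b * r = r ^ 2 - c * s := by
        linear_combination (r / 2) * hsum - hdiff / 4
      have hv2 : ‖v‖ ^ 2 * r ^ 2 = (r ^ 2 - c ^ 2) * r ^ 2 + c ^ 2 * s ^ 2 := by
        linear_combination (-(r^2)) * hα + (a * r + r ^ 2 + c * s) * haa
      have hsa : s + c ≤ a := by
        have h := real_inner_le_norm (v + c • e) e
        rw [inner_add_left, real_inner_smul_left, real_inner_self_eq_norm_sq, he1] at h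
        simpa [← hs_def] using h
      have hsb : c - s ≤ b := by
        have h := real_inner_le_norm (c • e - v) e
        rw [inner_sub_left, real_inner_smul_left, real_inner_self_eq_norm_sq, he1] at h
        rw [hb_def, norm_sub_rev]
        simpa [← hs_def] using h
      rcases le_or_gt s c with hsc | hsc
      · rcases le_or_gt (-c) s with hcs | hcs
        · -- |s| ≤ c
          refine ⟨(s + c) / (2 * c), ⟨div_nonneg (by linarith) (by positivity), ?_⟩, ?_⟩
          · rw [div_le_one (by positivity)]; linarith
          · have hpt : z - (x + ((s + c) / (2 * c)) • (y - x)) = v - s • e := by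
              rw [← hce, smul_smul]
              have hco : (s + c) / (2 * c) * (2 * c) = s + c := by field_simp
              rw [hco, hv_def, add_smul]; abel
            rw [hpt, norm_sub_sq_real, real_inner_smul_right, norm_smul, he1, ← hs_def]
            have hns : (‖s‖ * 1) ^ 2 = s ^ 2 := by
              rw [Real.norm_eq_abs, mul_one, sq_abs]
            rw [hns]
            have hcr2 : c ^ 2 ≤ r ^ 2 := by nlinarith
            have hkey : 0 ≤ s ^ 2 * (r ^ 2 - c ^ 2) :=
              mul_nonneg (sq_nonneg s) (by linarith)
            nlinarith [hv2, mul_pos hr0 hr0, hkey]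
        · -- s < -c : take t = 0, point x
          refine ⟨0, by norm_num, ?_⟩
          simp only [zero_smul, add_zero]
          rw [h1, hα]
          have hsr : -r ≤ s := by
            nlinarith [mul_le_mul_of_nonneg_right hsb hr0.le, hbb,
              mul_pos (sub_pos.2 hrc) hr0]
          have key := quad_aux c r (-s) hcp (by linarith) (by linarith)
          nlinarith [hv2, mul_pos hr0 hr0, key]
      · -- s > c : take t = 1, point y
        have hsr : s ≤ r := by
          have h := mul_le_mul_of_nonneg_right hsa hr0.le
          nlinarith [h, haa, mul_pos (sub_pos.2 hrc) hr0]
        refine ⟨1, by norm_num, ?_⟩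
        have hpt : x + (1:ℝ) • (y - x) = y := by rw [one_smul]; abel
        rw [hpt, h2, hβ]
        have key := quad_aux c r s hcp hsc.le hsr
        nlinarith [hv2, mul_pos hr0 hr0]


lemma heaviside_nonneg (s : ℝ) : 0 ≤ heaviside s := by
  unfold heaviside; split <;> norm_num

lemma heaviside_of_nonneg {s : ℝ} (h : 0 ≤ s) : heaviside s = 1 := if_pos h

/-- Pointwise bound for `e^{−ε|z|}` on the ellipsoid `{z : |z−x| + |z−y| = 2r}`,
where `c = |x−y|/2` and `μ = min_{t∈[0,1]} |x + t(y−x)|`; in particular, a potential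
with `|∇V| ≤ εA e^{−ε|·|}` satisfies the corresponding Heaviside-function bound on
the ellipsoid. -/
theorem exp_bound_on_ellipsoid
    (ε : ℝ) (hε : 0 < ε) (x y : R3) (c μ : ℝ)
    (hc : c = ‖x - y‖ / 2)
    (hμ : μ = ⨅ t : Set.Icc (0 : ℝ) 1, ‖x + (t : ℝ) • (y - x)‖)
    (r : ℝ) (hr : c ≤ r) (z : R3) (hz : ‖z - x‖ + ‖z - y‖ = 2 * r) :
    Real.exp (-ε * ‖z‖) ≤
        Real.exp (ε * (c + μ - r)) * heaviside (r - Real.sqrt (μ ^ 2 + c ^ 2))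
          + Real.exp (ε * (Real.sqrt (r ^ 2 - c ^ 2) - μ)) * heaviside (c + μ - r)
      ∧ ∀ (A : ℝ) (V : R3 → ℂ),
          (∀ w : R3, ‖fderiv ℝ V w‖ ≤ ε * A * Real.exp (-ε * ‖w‖)) →
          ‖fderiv ℝ V z‖ ≤ ε * A *
            (Real.exp (ε * (c + μ - r)) * heaviside (r - Real.sqrt (μ ^ 2 + c ^ 2))
              + Real.exp (ε * (Real.sqrt (r ^ 2 - c ^ 2) - μ)) * heaviside (c + μ - r)) := by
  have hcn : 0 ≤ c := by rw [hc]; positivity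
  haveI : Nonempty (Set.Icc (0 : ℝ) 1) := ⟨⟨0, by norm_num⟩⟩
  have hbdd : BddBelow (Set.range fun t : Set.Icc (0 : ℝ) 1 => ‖x + (t : ℝ) • (y - x)‖) := by
    refine ⟨0, ?_⟩
    rintro _ ⟨t, rfl⟩
    exact norm_nonneg _
  have hμ0 : 0 ≤ μ := by
    rw [hμ]
    exact le_ciInf fun t => norm_nonneg _
  -- Part A : r - c - ‖z‖ ≤ μ
  have hA : r - c - ‖z‖ ≤ μ := by
    rw [hμ]
    refine le_ciInf fun t => ?_
    obtain ⟨t, ht0, ht1⟩ := t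
    set p := x + t • (y - x) with hp
    have e1 : ‖z - x‖ ≤ ‖z - p‖ + ‖p - x‖ := norm_sub_le_norm_sub_add_norm_sub z p x
    have e2 : ‖z - y‖ ≤ ‖z - p‖ + ‖p - y‖ := norm_sub_le_norm_sub_add_norm_sub z p y
    have e3 : ‖p - x‖ = t * ‖x - y‖ := by
      have : p - x = t • (y - x) := by rw [hp]; abel
      rw [this, norm_smul, Real.norm_eq_abs, abs_of_nonneg ht0, norm_sub_rev]
    have e4 : ‖p - y‖ = (1 - t) * ‖x - y‖ := by
      have : p - y = (1 - t) • (x - y) := by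
        rw [hp]; module
      rw [this, norm_smul, Real.norm_eq_abs, abs_of_nonneg (by linarith)]
    have e5 : ‖z - p‖ ≤ ‖z‖ + ‖p‖ := norm_sub_le z p
    have hxy : ‖x - y‖ = 2 * c := by rw [hc]; ring
    rw [hxy] at e3 e4
    simp only [hp] at *
    linarith
  -- Part B : μ ≤ ‖z‖ + √(r² - c²)
  have hrc2 : 0 ≤ r ^ 2 - c ^ 2 := by nlinarith
  have hB : μ ≤ ‖z‖ + Real.sqrt (r ^ 2 - c ^ 2) := by
    obtain ⟨t, ht, hle⟩ := geom_key x y z c r hc hr hz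
    have h1 : μ ≤ ‖x + t • (y - x)‖ := by
      rw [hμ]
      exact ciInf_le hbdd ⟨t, ht⟩
    have h2 : ‖x + t • (y - x)‖ ≤ ‖z‖ + ‖z - (x + t • (y - x))‖ := by
      have := norm_sub_le z (z - (x + t • (y - x)))
      simpa using this
    have h3 : ‖z - (x + t • (y - x))‖ ≤ Real.sqrt (r ^ 2 - c ^ 2) := by
      have h := Real.sqrt_le_sqrt hle
      rwa [Real.sqrt_sq (norm_nonneg _)] at h
    linarith
  have hmain : Real.exp (-ε * ‖z‖) ≤
      Real.exp (ε * (c + μ - r)) * heaviside (r - Real.sqrt (μ ^ 2 + c ^ 2))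
        + Real.exp (ε * (Real.sqrt (r ^ 2 - c ^ 2) - μ)) * heaviside (c + μ - r) := by
    rcases le_or_gt (Real.sqrt (μ ^ 2 + c ^ 2)) r with h1 | h1
    · have hH1 : heaviside (r - Real.sqrt (μ ^ 2 + c ^ 2)) = 1 :=
        heaviside_of_nonneg (by linarith)
      have hE : Real.exp (-ε * ‖z‖) ≤ Real.exp (ε * (c + μ - r)) := by
        apply Real.exp_le_exp.mpr
        nlinarith [hA]
      have hpos : 0 ≤ Real.exp (ε * (Real.sqrt (r ^ 2 - c ^ 2) - μ)) *
          heaviside (c + μ - r) :=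
        mul_nonneg (Real.exp_nonneg _) (heaviside_nonneg _)
      rw [hH1, mul_one]
      linarith
    · have hsle : Real.sqrt (μ ^ 2 + c ^ 2) ≤ μ + c := by
        rw [show μ + c = Real.sqrt ((μ + c) ^ 2) by rw [Real.sqrt_sq (by linarith)]]
        apply Real.sqrt_le_sqrt
        nlinarith [mul_nonneg hμ0 hcn]
      have hH2 : heaviside (c + μ - r) = 1 := heaviside_of_nonneg (by linarith)
      have hE : Real.exp (-ε * ‖z‖) ≤ Real.exp (ε * (Real.sqrt (r ^ 2 - c ^ 2) - μ)) := by
        apply Real.exp_le_exp.mpr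
        nlinarith [hB]
      have hpos : 0 ≤ Real.exp (ε * (c + μ - r)) *
          heaviside (r - Real.sqrt (μ ^ 2 + c ^ 2)) :=
        mul_nonneg (Real.exp_nonneg _) (heaviside_nonneg _)
      rw [hH2, mul_one]
      linarith
  refine ⟨hmain, fun A V hV => ?_⟩
  have h0 := hV z
  have hεA : 0 ≤ ε * A := by
    nlinarith [(norm_nonneg (fderiv ℝ V z)).trans h0, Real.exp_pos (-ε * ‖z‖)]
  calc ‖fderiv ℝ V z‖ ≤ ε * A * Real.exp (-ε * ‖z‖) := h0
    _ ≤ ε * A * (Real.exp (ε * (c + μ - r)) * heaviside (r - Real.sqrt (μ ^ 2 + c ^ 2))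
        + Real.exp (ε * (Real.sqrt (r ^ 2 - c ^ 2) - μ)) * heaviside (c + μ - r)) :=
      mul_le_mul_of_nonneg_left hmain hεA
end
end
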